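/- Let δ > 0, B > 0, let H_N be an N×N real symmetric matrix with ‖H_N‖ ≤ B, and let θ be a real number with 0 < |θ| ≤ B. Suppose z_θ is a real number with m_N(z_θ) = 1/θ and either z_θ ≥ λ_1(H_N) + 2δ or z_θ ≤ λ_N(H_N) − 2δ. Then for every real ξ with |ξ| ≤ δ, one has |ξ|/(8B³) ≤ |m_N'(z_θ + ξ) − m_N'(z_θ)| ≤ 8|ξ|/δ³. -/

import Mathlib

open MeasureTheory Matrix Filter

/-- Operator norm (ℓ²→ℓ²) of a real matrix. -/
noncomputable def opNorm {m n : ℕ} (A : Matrix (Fin m) (Fin n) ℝ) : ℝ :=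
  ‖LinearMap.toContinuousLinearMap (Matrix.toEuclideanLin A)‖

/-- The eigenvalues of a Hermitian matrix, listed in decreasing order (with multiplicity);
junk value `0` if the matrix is not Hermitian. -/
noncomputable def eigDesc {𝕜 : Type*} [RCLike 𝕜] {N : ℕ} (A : Matrix (Fin N) (Fin N) 𝕜) :
    Fin N → ℝ :=
  if h : A.IsHermitian then fun k => h.eigenvalues (Tuple.sort h.eigenvalues k.rev) else 0

/-! Write `a_k = |z - λ_k| ≥ 2δ` and `ε = ±ξ` according to the side of the spectrum on which `z`
lies. Then `m_N'(z + ξ) - m_N'(z) = ε · mean_k (2a_k + ε) / (a_k² (a_k + ε)²)`, a mean of positive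
terms, and `|ε| ≤ a_k / 2` pins each term between `2 / (3a_k³)` and `12 / a_k³`. The upper bound
then follows from `a_k ≥ 2δ`; for the lower one, the power mean inequality gives
`mean (1/a_k³) ≥ (mean (1/a_k))³ = 1/|θ|³ ≥ 1/B³`. -/

noncomputable def invSqDiffQuot (a ξ : ℝ) : ℝ := (2 * a + ξ) / (a ^ 2 * (a + ξ) ^ 2)

lemma inv_sq_sub_inv_sq_eq_mul_invSqDiffQuot {a ξ : ℝ} (ha : a ≠ 0) (haξ : a + ξ ≠ 0) :
    1 / a ^ 2 - 1 / (a + ξ) ^ 2 = ξ * invSqDiffQuot a ξ := by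
  unfold invSqDiffQuot
  field_simp
  ring

lemma div_pow_three_le_invSqDiffQuot {a ξ : ℝ} (ha : 0 < a) (hξ : |ξ| ≤ a / 2) :
    2 / (3 * a ^ 3) ≤ invSqDiffQuot a ξ := by
  obtain ⟨hξl, hξu⟩ := abs_le.mp hξ
  have haξ : 0 < a + ξ := by linarith
  calc 2 / (3 * a ^ 3) = (3 * a / 2) / (a ^ 2 * (3 * a / 2) ^ 2) := by field_simp
    _ ≤ (2 * a + ξ) / (a ^ 2 * (3 * a / 2) ^ 2) := by gcongr; linarith
    _ ≤ invSqDiffQuot a ξ := by unfold invSqDiffQuot; gcongr <;> linarith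

lemma invSqDiffQuot_le_div_pow_three {a ξ : ℝ} (ha : 0 < a) (hξ : |ξ| ≤ a / 2) :
    invSqDiffQuot a ξ ≤ 12 / a ^ 3 := by
  obtain ⟨hξl, hξu⟩ := abs_le.mp hξ
  calc invSqDiffQuot a ξ ≤ (3 * a) / (a ^ 2 * (a / 2) ^ 2) := by
        unfold invSqDiffQuot; gcongr <;> linarith
    _ = 12 / a ^ 3 := by field_simp; norm_num

lemma pow_mean_le_mean_pow {ι : Type*} [Fintype ι] [Nonempty ι] (f : ι → ℝ)
    (hf : ∀ i, 0 ≤ f i) (m : ℕ) :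
    (1 / (Fintype.card ι : ℝ) * ∑ i, f i) ^ m ≤ 1 / (Fintype.card ι : ℝ) * ∑ i, f i ^ m := by
  have hw : ∑ _i : ι, 1 / (Fintype.card ι : ℝ) = 1 := by simp
  simpa only [Finset.mul_sum] using
    Real.pow_arith_mean_le_arith_mean_pow Finset.univ (fun _ => 1 / (Fintype.card ι : ℝ)) f
      (fun _ _ => by positivity) hw (fun i _ => hf i) m

section
variable {ι : Type*} [Fintype ι] [Nonempty ι] {a : ι → ℝ} {δ ξ : ℝ}

lemma mean_invSqDiffQuot_le (hδ : 0 < δ) (ha : ∀ k, 2 * δ ≤ a k) (hξ : |ξ| ≤ δ) :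
    1 / (Fintype.card ι : ℝ) * ∑ k, invSqDiffQuot (a k) ξ ≤ 8 / δ ^ 3 := by
  have hterm : ∀ k, invSqDiffQuot (a k) ξ ≤ 8 / δ ^ 3 := fun k =>
    calc invSqDiffQuot (a k) ξ ≤ 12 / a k ^ 3 :=
          invSqDiffQuot_le_div_pow_three (by linarith [ha k]) (by linarith [ha k])
      _ ≤ 12 / (2 * δ) ^ 3 := by gcongr; exact ha k
      _ ≤ 8 / δ ^ 3 := by rw [mul_pow, ← div_div]; gcongr; norm_num
  calc 1 / (Fintype.card ι : ℝ) * ∑ k, invSqDiffQuot (a k) ξ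
      ≤ 1 / (Fintype.card ι : ℝ) * ∑ _k : ι, 8 / δ ^ 3 := by gcongr with k; exact hterm k
    _ = 8 / δ ^ 3 := by simp

lemma div_pow_le_mean_invSqDiffQuot {θ B : ℝ} (hδ : 0 < δ) (ha : ∀ k, 2 * δ ≤ a k)
    (hξ : |ξ| ≤ δ) (hmean : 1 / (Fintype.card ι : ℝ) * ∑ k, 1 / a k = 1 / θ) (hθB : |θ| ≤ B) :
    1 / (8 * B ^ 3) ≤ 1 / (Fintype.card ι : ℝ) * ∑ k, invSqDiffQuot (a k) ξ := by
  have ha0 : ∀ k, 0 < a k := fun k => by linarith [ha k]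
  have hθ : 0 < θ := by
    rw [← one_div_pos, ← hmean]
    exact mul_pos (by positivity) (Finset.sum_pos (fun k _ => one_div_pos.mpr (ha0 k))
      Finset.univ_nonempty)
  have hθB' : θ ≤ B := (le_abs_self θ).trans hθB
  have hB : 0 < B := hθ.trans_le hθB'
  calc 1 / (8 * B ^ 3) ≤ 2 / 3 * (1 / B) ^ 3 := by
        rw [div_pow, one_pow]; field_simp; norm_num
    _ ≤ 2 / 3 * (1 / θ) ^ 3 := by gcongr
    _ ≤ 2 / 3 * (1 / (Fintype.card ι : ℝ) * ∑ k, (1 / a k) ^ 3) := by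
        rw [← hmean]
        gcongr
        exact pow_mean_le_mean_pow _ (fun k => (one_div_pos.mpr (ha0 k)).le) 3
    _ = 1 / (Fintype.card ι : ℝ) * ∑ k, 2 / (3 * a k ^ 3) := by
        rw [Finset.mul_sum, Finset.mul_sum, Finset.mul_sum]
        refine Finset.sum_congr rfl fun k _ => ?_
        field_simp
    _ ≤ 1 / (Fintype.card ι : ℝ) * ∑ k, invSqDiffQuot (a k) ξ := by
        gcongr with k
        exact div_pow_three_le_invSqDiffQuot (ha0 k) (by linarith [ha k])

theorem abs_mean_inv_sq_sub_inv_sq_bounds {θ B : ℝ} (hδ : 0 < δ) (ha : ∀ k, 2 * δ ≤ a k)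
    (hξ : |ξ| ≤ δ) (hmean : 1 / (Fintype.card ι : ℝ) * ∑ k, 1 / a k = 1 / θ) (hθB : |θ| ≤ B) :
    |ξ| / (8 * B ^ 3)
        ≤ |1 / (Fintype.card ι : ℝ) * ∑ k, (1 / a k ^ 2 - 1 / (a k + ξ) ^ 2)| ∧
    |1 / (Fintype.card ι : ℝ) * ∑ k, (1 / a k ^ 2 - 1 / (a k + ξ) ^ 2)| ≤ 8 * |ξ| / δ ^ 3 := by
  have ha0 : ∀ k, 0 < a k := fun k => by linarith [ha k]
  have hξa : ∀ k, |ξ| ≤ a k / 2 := fun k => by linarith [ha k]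
  have hdiff : 1 / (Fintype.card ι : ℝ) * ∑ k, (1 / a k ^ 2 - 1 / (a k + ξ) ^ 2)
      = ξ * (1 / (Fintype.card ι : ℝ) * ∑ k, invSqDiffQuot (a k) ξ) := by
    rw [mul_left_comm, Finset.mul_sum _ _ ξ]
    congr 1
    refine Finset.sum_congr rfl fun k _ => inv_sq_sub_inv_sq_eq_mul_invSqDiffQuot (ha0 k).ne' ?_
    linarith [neg_abs_le ξ, hξa k, ha0 k]
  have hmean_nonneg : 0 ≤ 1 / (Fintype.card ι : ℝ) * ∑ k, invSqDiffQuot (a k) ξ := by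
    refine mul_nonneg (by positivity) (Finset.sum_nonneg fun k _ => ?_)
    exact (by have := ha0 k; positivity : (0 : ℝ) ≤ 2 / (3 * a k ^ 3)).trans
      (div_pow_three_le_invSqDiffQuot (ha0 k) (hξa k))
  rw [hdiff, abs_mul, abs_of_nonneg hmean_nonneg]
  constructor
  · rw [div_eq_mul_one_div]
    gcongr
    exact div_pow_le_mean_invSqDiffQuot hδ ha hξ hmean hθB
  · rw [mul_comm 8, mul_div_assoc]
    gcongr
    exact mean_invSqDiffQuot_le hδ ha hξ

end

lemma eigDesc_antitone {N : ℕ} {H : Matrix (Fin N) (Fin N) ℝ} (hH : H.IsHermitian) :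
    Antitone (eigDesc H) := by
  intro i j hij
  simp only [eigDesc, dif_pos hH]
  exact Tuple.monotone_sort hH.eigenvalues (Fin.rev_le_rev.mpr hij)

theorem stmt15 (δ B : ℝ) (hδ : 0 < δ) (N : ℕ) (hN : 1 ≤ N)
    (H : Matrix (Fin N) (Fin N) ℝ) (hH : H.IsHermitian)
    (θ : ℝ) (hθB : |θ| ≤ B)
    (z : ℝ) (hz : (1 / (N : ℝ)) * ∑ k, 1 / (z - eigDesc H k) = 1 / θ)
    (hsep : eigDesc H ⟨0, by omega⟩ + 2 * δ ≤ z ∨ z ≤ eigDesc H ⟨N - 1, by omega⟩ - 2 * δ)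
    (ξ : ℝ) (hξ : |ξ| ≤ δ) :
    |ξ| / (8 * B ^ 3)
        ≤ |(-(1 / (N : ℝ)) * ∑ k, 1 / (z + ξ - eigDesc H k) ^ 2)
            - (-(1 / (N : ℝ)) * ∑ k, 1 / (z - eigDesc H k) ^ 2)| ∧
    |(-(1 / (N : ℝ)) * ∑ k, 1 / (z + ξ - eigDesc H k) ^ 2)
        - (-(1 / (N : ℝ)) * ∑ k, 1 / (z - eigDesc H k) ^ 2)| ≤ 8 * |ξ| / δ ^ 3 := by
  have : Nonempty (Fin N) := ⟨⟨0, by omega⟩⟩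
  have hanti := eigDesc_antitone hH
  rcases hsep with hsep | hsep
  · have ha : ∀ k, 2 * δ ≤ z - eigDesc H k := fun k => by
      linarith [hanti (Fin.le_def.mpr (Nat.zero_le k) : (⟨0, by omega⟩ : Fin N) ≤ k)]
    have key := abs_mean_inv_sq_sub_inv_sq_bounds hδ ha hξ (by simpa using hz) hθB
    simp only [Fintype.card_fin] at key
    convert key using 3 <;> simp only [Finset.mul_sum, ← Finset.sum_sub_distrib] <;>
      exact Finset.sum_congr rfl fun k _ => by ring
  · have ha : ∀ k, 2 * δ ≤ eigDesc H k - z := fun k => by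
      linarith [hanti (Fin.le_def.mpr (Nat.le_sub_one_of_lt k.isLt) : k ≤ ⟨N - 1, by omega⟩)]
    have hmean : 1 / (N : ℝ) * ∑ k, 1 / (eigDesc H k - z) = 1 / -θ := by
      simp only [← neg_sub z, one_div_neg_eq_neg_one_div, Finset.sum_neg_distrib, mul_neg, hz]
    have key := abs_mean_inv_sq_sub_inv_sq_bounds (ξ := -ξ) hδ ha ((abs_neg ξ).trans_le hξ)
      (by simpa using hmean) ((abs_neg θ).trans_le hθB)
    simp only [Fintype.card_fin, abs_neg] at key
    convert key using 3 <;> simp only [Finset.mul_sum, ← Finset.sum_sub_distrib] <;>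
      exact Finset.sum_congr rfl fun k _ => by ring
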